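/- Sterbenz-type exactness for FPANs (Lemma SETZ-EN0 core): let x and y be nonzero precision-p binary floating-point numbers with trailing exponents f_x, f_y (place value of the last nonzero mantissa bit) and exponents e_x, e_y. If f_x > e_y (the mantissas do not overlap, x strictly above y) and e_x < f_y + p (the combined span fits in p bits) and x, y have the same sign, then x + y is exactly representable in precision p: the sum s = x + y is a floating-point number with exponent e_s = e_x and trailing exponent f_s = f_y, and the rounding error of x ⊕ y is zero. -/

import Mathlib

/-- t is representable in precision-p binary floating-point arithmetic. -/
def FpRep (p : ℕ) (t : ℝ) : Prop :=
  ∃ (m g : ℤ), |m| < (2 : ℤ) ^ p ∧ t = (m : ℝ) * (2 : ℝ) ^ g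

/-- R rounds to a nearest precision-p floating-point number. -/
def IsRNE (p : ℕ) (R : ℝ → ℝ) : Prop :=
  ∀ t : ℝ, FpRep p (R t) ∧ ∀ z : ℝ, FpRep p z → |t - R t| ≤ |t - z|

/-- x is a nonzero precision-p binary float with exponent e and trailing
exponent f: x = M·2^f with M odd, 2^e ≤ |x| < 2^(e+1), and e - f ≤ p - 1. -/
def FpTrail (p : ℕ) (e f : ℤ) (x : ℝ) : Prop :=
  ∃ M : ℤ, Odd M ∧ x = (M : ℝ) * (2 : ℝ) ^ f ∧
    (2 : ℝ) ^ e ≤ |x| ∧ |x| < (2 : ℝ) ^ (e + 1) ∧ e - f ≤ (p : ℤ) - 1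

/-!
Write `x = M_x·2^(f_x)` and `y = M_y·2^(f_y)`. Since `f_y ≤ e_y < f_x`, the sum is
`(M_x·2^(f_x - f_y) + M_y)·2^(f_y)` with an odd integer factor. Because the signs agree,
`|x + y| = |x| + |y|`; the lower bound `2^(e_x) ≤ |x + y|` is then immediate, and the upper
bound follows from `|x| ≤ 2^(e_x + 1) - 2^(f_x)` (a multiple of `2^(f_x)` below `2^(e_x + 1)`)
together with `|y| < 2^(e_y + 1) ≤ 2^(f_x)`. Finally `|x + y| < 2^(e_x + 1) ≤ 2^(p + f_y)`
makes the odd factor smaller than `2^p`, so the sum is a float and rounding fixes it.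
-/

theorem exists_odd_mul_zpow_add (a : ℤ) {b : ℤ} (hb : Odd b) {f g : ℤ} (hgf : g < f) :
    ∃ N : ℤ, Odd N ∧ (a : ℝ) * 2 ^ f + b * 2 ^ g = N * 2 ^ g := by
  obtain ⟨k, rfl⟩ : ∃ k : ℕ, f = g + (k + 1) := ⟨(f - g - 1).toNat, by omega⟩
  have h_even : Even (a * 2 ^ (k + 1)) := (even_two.pow_of_ne_zero k.succ_ne_zero).mul_left a
  refine ⟨a * 2 ^ (k + 1) + b, h_even.add_odd hb, ?_⟩
  rw [zpow_add₀ two_ne_zero, show ((k : ℤ) + 1) = ((k + 1 : ℕ) : ℤ) by push_cast; ring,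
    zpow_natCast]
  push_cast
  ring

theorem add_one_mul_zpow_le_of_mul_zpow_lt (n : ℤ) {f e : ℤ} (hfe : f ≤ e)
    (h : (n : ℝ) * 2 ^ f < 2 ^ e) : ((n : ℝ) + 1) * 2 ^ f ≤ 2 ^ e := by
  obtain ⟨k, rfl⟩ : ∃ k : ℕ, e = f + k := ⟨(e - f).toNat, by omega⟩
  rw [zpow_add₀ two_ne_zero, zpow_natCast, mul_comm ((2 : ℝ) ^ f)] at h ⊢
  have hn : n < 2 ^ k := by exact_mod_cast lt_of_mul_lt_mul_right h (zpow_pos two_pos f).le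
  have hn' : (n : ℝ) + 1 ≤ 2 ^ k := by exact_mod_cast Int.add_one_le_of_lt hn
  exact mul_le_mul_of_nonneg_right hn' (zpow_pos two_pos f).le

theorem FpRep.of_abs_lt {p : ℕ} {t : ℝ} {N g : ℤ} (ht : t = N * 2 ^ g)
    (hlt : |t| < 2 ^ ((p : ℤ) + g)) : FpRep p t := by
  refine ⟨N, g, ?_, ht⟩
  rw [ht, abs_mul, abs_of_pos (zpow_pos two_pos g : (0 : ℝ) < 2 ^ g), zpow_add₀ two_ne_zero,
    zpow_natCast] at hlt
  exact_mod_cast lt_of_mul_lt_mul_right hlt (zpow_pos two_pos g).le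

theorem IsRNE.apply_eq_of_fpRep {p : ℕ} {R : ℝ → ℝ} (hR : IsRNE p R) {t : ℝ}
    (ht : FpRep p t) : R t = t := by
  have h := (hR t).2 t ht
  rw [sub_self, abs_zero] at h
  linarith [abs_nonpos_iff.1 h]

namespace FpTrail

variable {p : ℕ} {e f : ℤ} {x : ℝ}

theorem exists_abs_eq_mul_zpow (hx : FpTrail p e f x) :
    ∃ M : ℤ, M ≠ 0 ∧ |x| = (|M| : ℤ) * (2 : ℝ) ^ f := by
  obtain ⟨M, hM, rfl, -⟩ := hx
  refine ⟨M, by rintro rfl; simp at hM, ?_⟩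
  rw [abs_mul, abs_of_pos (zpow_pos two_pos f : (0 : ℝ) < 2 ^ f), Int.cast_abs]

theorem zpow_trail_le_abs (hx : FpTrail p e f x) : (2 : ℝ) ^ f ≤ |x| := by
  obtain ⟨M, hM, hxM⟩ := hx.exists_abs_eq_mul_zpow
  have hM1 : (1 : ℝ) ≤ (|M| : ℤ) := by exact_mod_cast Int.one_le_abs hM
  rw [hxM]
  exact le_mul_of_one_le_left (zpow_pos two_pos f).le hM1

theorem trail_le_exp (hx : FpTrail p e f x) : f ≤ e := by
  obtain ⟨-, -, -, -, hlt, -⟩ := id hx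
  have h := (zpow_lt_zpow_iff_right₀ one_lt_two).1 (hx.zpow_trail_le_abs.trans_lt hlt)
  omega

theorem abs_add_zpow_trail_le (hx : FpTrail p e f x) : |x| + 2 ^ f ≤ (2 : ℝ) ^ (e + 1) := by
  obtain ⟨M, -, hxM⟩ := hx.exists_abs_eq_mul_zpow
  obtain ⟨-, -, -, -, hlt, -⟩ := id hx
  have h := add_one_mul_zpow_le_of_mul_zpow_lt |M| (by linarith [hx.trail_le_exp]) (hxM ▸ hlt)
  rwa [hxM, ← add_one_mul]

end FpTrail

theorem exact_nonoverlapping_sum_general (p : ℕ) (R : ℝ → ℝ) (hR : IsRNE p R)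
    (x y : ℝ) (ex fx ey fy : ℤ)
    (hx : FpTrail p ex fx x) (hy : FpTrail p ey fy y)
    (hsign : 0 < x * y) (hno : fx > ey) (hspan : ex < fy + (p : ℤ)) :
    (∃ N : ℤ, Odd N ∧ x + y = (N : ℝ) * (2 : ℝ) ^ fy) ∧
      (2 : ℝ) ^ ex ≤ |x + y| ∧ |x + y| < (2 : ℝ) ^ (ex + 1) ∧
      ex - fy ≤ (p : ℤ) - 1 ∧
      R (x + y) = x + y := by
  obtain ⟨Mx, -, hx_eq, hx_lo, -⟩ := id hx
  obtain ⟨My, hMy, hy_eq, -, hy_hi, -⟩ := id hy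
  obtain ⟨N, hN, hsum⟩ := exists_odd_mul_zpow_add Mx hMy (hy.trail_le_exp.trans_lt hno)
  rw [← hx_eq, ← hy_eq] at hsum
  have habs : |x + y| = |x| + |y| := (abs_add_eq_add_abs_iff x y).2 <| by
    rcases mul_pos_iff.1 hsign with h | h
    exacts [.inl ⟨h.1.le, h.2.le⟩, .inr ⟨h.1.le, h.2.le⟩]
  have hy_lt : |y| < 2 ^ fx := hy_hi.trans_le (zpow_le_zpow_right₀ one_le_two (by omega))
  have hlt : |x + y| < 2 ^ (ex + 1) := by linarith [hx.abs_add_zpow_trail_le]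
  refine ⟨⟨N, hN, hsum⟩, by linarith [abs_nonneg y], hlt, by omega,
    hR.apply_eq_of_fpRep (FpRep.of_abs_lt hsum ?_)⟩
  exact hlt.trans_le (zpow_le_zpow_right₀ one_le_two (by omega))

/-- Sterbenz-type exactness: if f_x > e_y and e_x < f_y + p and x, y have the
same sign, then x + y is exactly representable with exponent e_x and trailing
exponent f_y, and the rounding error of x ⊕ y is zero. -/
theorem exact_nonoverlapping_sum (p : ℕ) (hp : 1 ≤ p) (R : ℝ → ℝ) (hR : IsRNE p R)
    (x y : ℝ) (ex fx ey fy : ℤ)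
    (hx : FpTrail p ex fx x) (hy : FpTrail p ey fy y)
    (hsign : 0 < x * y) (hno : fx > ey) (hspan : ex < fy + (p : ℤ)) :
    (∃ N : ℤ, Odd N ∧ x + y = (N : ℝ) * (2 : ℝ) ^ fy) ∧
      (2 : ℝ) ^ ex ≤ |x + y| ∧ |x + y| < (2 : ℝ) ^ (ex + 1) ∧
      ex - fy ≤ (p : ℤ) - 1 ∧
      R (x + y) = x + y :=
  exact_nonoverlapping_sum_general p R hR x y ex fx ey fy hx hy hsign hno hspan
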